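/- Let G be a finite d-regular graph, S ⊆ V(G), and f : V(G) → [0,1] with ‖f‖₁ = μ(S) and ‖f - χ_S‖ < √(μ(S))/6. Then there exists a set U ⊆ supp(f) such that μ(U) < 2μ(S), μ(U ∩ S) > (3/4)μ(S), and ‖χ_U - Mχ_U‖₁ ≤ 4·d^{1/2}·72^{1/4}·μ(S)^{3/4}·‖f - Mf‖^{1/2}. -/

import Mathlib

open Finset

noncomputable def markov {V : Type*} [Fintype V] (G : SimpleGraph V) [DecidableRel G.Adj]
    (d : ℕ) (f : V → ℝ) : V → ℝ :=
  fun v => (∑ u ∈ G.neighborFinset v, f u) / d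

noncomputable def l2norm {V : Type*} [Fintype V] (f : V → ℝ) : ℝ :=
  Real.sqrt ((∑ v, f v ^ 2) / Fintype.card V)

noncomputable def l1norm {V : Type*} [Fintype V] (f : V → ℝ) : ℝ :=
  (∑ v, |f v|) / Fintype.card V

noncomputable def indic {V : Type*} [DecidableEq V] (S : Finset V) : V → ℝ :=
  fun v => if v ∈ S then 1 else 0

/-!
The set is a level set `U = {f > τ}` with `τ ∈ [1/6, 2/3)`. Every such level set is close to `S`:
a vertex of `U \ S` contributes at least `1/36`, and one of `S \ U` at least `1/9`, to
`∑ (f - χ_S)²`. The threshold is chosen by the first-moment method: averaged over `τ`, the number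
of ordered edges `(v, u)` cut by `U` is at most `2 ∑ |f v - f u|` over the edges with
`max (f v) (f u) > 1/6`. By Cauchy–Schwarz this is at most the square root of
`2d · #{f > 1/6} · ∑_{u ~ v} (f v - f u)²`, and the Dirichlet form satisfies
`∑_{u ~ v} (f v - f u)² = 2d ⟨f, f - Mf⟩ ≤ 2d ‖f‖ ‖f - Mf‖`.
-/

open MeasureTheory

noncomputable def superlevelSet {V : Type*} [Fintype V] (f : V → ℝ) (τ : ℝ) : Finset V :=
  univ.filter fun v => τ < f v

@[simp]
theorem mem_superlevelSet {V : Type*} [Fintype V] {f : V → ℝ} {τ : ℝ} {v : V} :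
    v ∈ superlevelSet f τ ↔ τ < f v := by
  simp [superlevelSet]

theorem abs_ite_lt_sub_ite_lt (τ x y : ℝ) :
    |(if τ < x then (1 : ℝ) else 0) - (if τ < y then 1 else 0)|
      = (Set.Ico (min x y) (max x y)).indicator 1 τ := by
  by_cases hx : τ < x <;> by_cases hy : τ < y <;>
    simp [Set.indicator, hx, hy, not_lt.mp]

theorem setIntegral_Ico_indicator_Ico_le {a b c e : ℝ} (hce : c ≤ e) :
    ∫ τ in Set.Ico a b, (Set.Ico c e).indicator 1 τ ≤ if a < e then e - c else 0 := by
  rw [integral_indicator_one measurableSet_Ico, measureReal_restrict_apply measurableSet_Ico,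
    Set.Ico_inter_Ico, Real.volume_real_Ico]
  have := min_le_left e b
  split_ifs with hae
  · exact max_le (by linarith [le_max_left c a]) (by linarith)
  · exact max_le (by linarith [le_max_right c a]) le_rfl

theorem exists_mem_Ico_mul_sum_abs_ite_lt_sub_le {ι : Type*} (s : Finset ι) (x y : ι → ℝ)
    {a b : ℝ} (hab : a < b) :
    ∃ τ ∈ Set.Ico a b,
      (b - a) * ∑ i ∈ s, |(if τ < x i then (1 : ℝ) else 0) - (if τ < y i then 1 else 0)|
        ≤ ∑ i ∈ s, if a < max (x i) (y i) then |x i - y i| else 0 := by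
  simp only [abs_ite_lt_sub_ite_lt]
  have hint (c e : ℝ) : IntegrableOn ((Set.Ico c e).indicator 1) (Set.Ico a b) :=
    (integrable_const (1 : ℝ)).indicator measurableSet_Ico
  obtain ⟨τ, hτ, hle⟩ := exists_le_setAverage (by simp [hab]) (by simp)
    (integrable_finsetSum s fun i _ => hint (min (x i) (y i)) (max (x i) (y i)))
  refine ⟨τ, hτ, ?_⟩
  rw [setAverage_eq, Real.volume_real_Ico, max_eq_left (by linarith), smul_eq_mul,
    integral_finsetSum _ fun i _ => hint _ _, inv_mul_eq_div, le_div_iff₀' (by linarith)] at hle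
  refine hle.trans (sum_le_sum fun i _ => ?_)
  rw [← max_sub_min_eq_abs']
  exact setIntegral_Ico_indicator_Ico_le min_le_max

section RegularGraph

variable {V : Type*} [Fintype V] (G : SimpleGraph V) [DecidableRel G.Adj]

theorem sum_sum_neighborFinset_comm {M : Type*} [AddCommMonoid M] (F : V → V → M) :
    ∑ v, ∑ u ∈ G.neighborFinset v, F v u = ∑ v, ∑ u ∈ G.neighborFinset v, F u v :=
  sum_comm' fun v u => by simp [G.adj_comm]

theorem sq_sum_sum_neighborFinset_mul_le (F H : V → V → ℝ) :
    (∑ v, ∑ u ∈ G.neighborFinset v, F v u * H v u) ^ 2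
      ≤ (∑ v, ∑ u ∈ G.neighborFinset v, F v u ^ 2) * ∑ v, ∑ u ∈ G.neighborFinset v, H v u ^ 2 := by
  have := sum_mul_sq_le_sq_mul_sq (univ.sigma fun v => G.neighborFinset v)
    (fun p : Σ _ : V, V => F p.1 p.2) (fun p => H p.1 p.2)
  rwa [sum_sigma, sum_sigma, sum_sigma] at this

variable {G} {d : ℕ} (hreg : ∀ v, G.degree v = d)
include hreg

theorem sum_neighborFinset_const (c : ℝ) (v : V) : ∑ _u ∈ G.neighborFinset v, c = d * c := by
  rw [sum_const, G.card_neighborFinset_eq_degree, hreg, nsmul_eq_mul]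

theorem sub_markov_eq (hd : d ≠ 0) (g : V → ℝ) (v : V) :
    g v - markov G d g v = (∑ u ∈ G.neighborFinset v, (g v - g u)) / d := by
  rw [sum_sub_distrib, sum_neighborFinset_const hreg, markov]
  field_simp

theorem sum_abs_sub_markov_le (hd : d ≠ 0) (g : V → ℝ) :
    ∑ v, |g v - markov G d g v| ≤ (∑ v, ∑ u ∈ G.neighborFinset v, |g v - g u|) / d := by
  rw [sum_div]
  refine sum_le_sum fun v _ => ?_
  rw [sub_markov_eq hreg hd, abs_div, Nat.abs_cast]
  gcongr
  exact abs_sum_le_sum_abs _ _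

theorem sum_sum_neighborFinset_sq_sub (hd : d ≠ 0) (g : V → ℝ) :
    ∑ v, ∑ u ∈ G.neighborFinset v, (g v - g u) ^ 2 = 2 * d * ∑ v, g v * (g v - markov G d g v) := by
  have hswap := sum_sum_neighborFinset_comm G fun v u => (g v - g u) * g u
  -- the last bracket sums to zero by `hswap`
  have hsplit (v u : V) : (g v - g u) ^ 2
      = 2 * (g v * (g v - g u)) + ((g u - g v) * g v - (g v - g u) * g u) := by ring
  calc ∑ v, ∑ u ∈ G.neighborFinset v, (g v - g u) ^ 2
      = ∑ v, ∑ u ∈ G.neighborFinset v, 2 * (g v * (g v - g u)) := by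
        simp only [hsplit, sum_add_distrib, sum_sub_distrib, hswap, sub_self, add_zero]
    _ = 2 * d * ∑ v, g v * (g v - markov G d g v) := by
        rw [mul_sum]
        refine sum_congr rfl fun v _ => ?_
        rw [sub_markov_eq hreg hd, ← mul_sum, ← mul_sum]
        field_simp

theorem sum_sum_neighborFinset_ite_le (g : V → ℝ) (c : ℝ) :
    ∑ v, ∑ u ∈ G.neighborFinset v, (if c < max (g v) (g u) then (1 : ℝ) else 0)
      ≤ 2 * d * #(superlevelSet g c) := by
  calc ∑ v, ∑ u ∈ G.neighborFinset v, (if c < max (g v) (g u) then (1 : ℝ) else 0)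
      ≤ ∑ v, ∑ u ∈ G.neighborFinset v,
          ((if c < g v then (1 : ℝ) else 0) + if c < g u then 1 else 0) := by
        gcongr with v _ u _
        simp only [lt_max_iff]
        split_ifs <;> norm_num; tauto
    _ = 2 * d * #(superlevelSet g c) := by
        rw [sum_congr rfl fun v _ => sum_add_distrib, sum_add_distrib,
          ← sum_sum_neighborFinset_comm G fun v u => if c < g v then (1 : ℝ) else 0]
        simp only [sum_neighborFinset_const hreg, ← mul_sum, sum_boole, superlevelSet]
        ring

theorem sq_sum_sum_neighborFinset_ite_abs_sub_le (hd : d ≠ 0) (g : V → ℝ) (c : ℝ) :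
    (∑ v, ∑ u ∈ G.neighborFinset v, if c < max (g v) (g u) then |g v - g u| else 0) ^ 2
      ≤ 2 * d * #(superlevelSet g c) * (2 * d * ∑ v, g v * (g v - markov G d g v)) := by
  rw [← sum_sum_neighborFinset_sq_sub hreg hd]
  calc _ = (∑ v, ∑ u ∈ G.neighborFinset v,
          (if c < max (g v) (g u) then (1 : ℝ) else 0) * |g v - g u|) ^ 2 := by
        simp only [ite_mul, one_mul, zero_mul]
    _ ≤ _ := sq_sum_sum_neighborFinset_mul_le G _ _
    _ ≤ _ := by
        simp only [ite_pow, one_pow, sq_abs, ne_eq, OfNat.ofNat_ne_zero, not_false_eq_true,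
          zero_pow]
        gcongr
        exact sum_sum_neighborFinset_ite_le hreg g c

variable [DecidableEq V]

theorem exists_mem_Ico_sq_mul_sum_abs_indic_sub_markov_le (hd : d ≠ 0) (g : V → ℝ) {a b : ℝ}
    (hab : a < b) :
    ∃ τ ∈ Set.Ico a b,
      ((b - a) * ∑ v, |indic (superlevelSet g τ) v - markov G d (indic (superlevelSet g τ)) v|) ^ 2
        ≤ 4 * #(superlevelSet g a) * ∑ v, g v * (g v - markov G d g v) := by
  obtain ⟨τ, hτ, hcut⟩ := exists_mem_Ico_mul_sum_abs_ite_lt_sub_le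
    (univ.sigma fun v => G.neighborFinset v) (fun p => g p.1) (fun p => g p.2) hab
  simp only [sum_sigma] at hcut
  refine ⟨τ, hτ, ?_⟩
  have hindic : indic (superlevelSet g τ) = fun v => if τ < g v then 1 else 0 := by
    ext v
    simp [indic]
  have hba : 0 ≤ b - a := sub_nonneg.2 hab.le
  calc ((b - a) * ∑ v, |indic (superlevelSet g τ) v - markov G d (indic (superlevelSet g τ)) v|) ^ 2
      ≤ ((∑ v, ∑ u ∈ G.neighborFinset v,
          if a < max (g v) (g u) then |g v - g u| else 0) / d) ^ 2 := by
        have := sum_abs_sub_markov_le hreg hd (indic (superlevelSet g τ))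
        rw [hindic] at this ⊢
        gcongr
        calc _ ≤ (b - a) * ((∑ v, ∑ u ∈ G.neighborFinset v,
                |(if τ < g v then (1 : ℝ) else 0) - if τ < g u then 1 else 0|) / d) := by
              gcongr
          _ ≤ _ := by
              rw [mul_div_assoc']
              gcongr
    _ ≤ 2 * d * #(superlevelSet g a) * (2 * d * ∑ v, g v * (g v - markov G d g v)) / d ^ 2 := by
        rw [div_pow]
        gcongr
        exact sq_sum_sum_neighborFinset_ite_abs_sub_le hreg hd g a
    _ = 4 * #(superlevelSet g a) * ∑ v, g v * (g v - markov G d g v) := by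
        field_simp
        ring

end RegularGraph

section NearIndicator

variable {V : Type*} [Fintype V] [DecidableEq V] {S : Finset V} {f : V → ℝ}

theorem card_mul_le_sum_sq_sub_indic {T : Finset V} {c : ℝ}
    (h : ∀ v ∈ T, c ≤ (f v - indic S v) ^ 2) : #T * c ≤ ∑ v, (f v - indic S v) ^ 2 := by
  rw [← nsmul_eq_mul]
  exact (card_nsmul_le_sum T _ c h).trans (sum_le_univ_sum_of_nonneg fun v => sq_nonneg _)

variable (hfS : ∑ v, (f v - indic S v) ^ 2 < #S / 36)
include hfS

theorem card_superlevelSet_sdiff_lt {τ : ℝ} (hτ : 1 / 6 ≤ τ) :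
    (#(superlevelSet f τ \ S) : ℝ) < #S := by
  have : #(superlevelSet f τ \ S) * (1 / 36 : ℝ) ≤ ∑ v, (f v - indic S v) ^ 2 :=
    card_mul_le_sum_sq_sub_indic fun v hv => by
      simp only [mem_sdiff, mem_superlevelSet] at hv
      simp only [indic, hv.2, if_false, sub_zero]
      nlinarith [hv.1]
  linarith

theorem card_sdiff_superlevelSet_lt {τ : ℝ} (hτ : τ < 2 / 3) :
    4 * (#(S \ superlevelSet f τ) : ℝ) < #S := by
  have : #(S \ superlevelSet f τ) * (1 / 9 : ℝ) ≤ ∑ v, (f v - indic S v) ^ 2 :=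
    card_mul_le_sum_sq_sub_indic fun v hv => by
      simp only [mem_sdiff, mem_superlevelSet, not_lt] at hv
      simp only [indic, hv.1, if_true]
      nlinarith [hv.2]
  linarith

theorem card_superlevelSet_lt_two_mul {τ : ℝ} (hτ : 1 / 6 ≤ τ) :
    (#(superlevelSet f τ) : ℝ) < 2 * #S := by
  have : (#(superlevelSet f τ) : ℝ) ≤ #(superlevelSet f τ \ S) + #S := by
    exact_mod_cast card_le_card_sdiff_add_card
  linarith [card_superlevelSet_sdiff_lt hfS hτ]

theorem three_quarters_mul_card_lt_card_superlevelSet_inter {τ : ℝ} (hτ : τ < 2 / 3) :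
    3 / 4 * (#S : ℝ) < #(superlevelSet f τ ∩ S) := by
  have : (#(S ∩ superlevelSet f τ) : ℝ) + #(S \ superlevelSet f τ) = #S := by
    exact_mod_cast card_inter_add_card_sdiff _ _
  rw [inter_comm]
  linarith [card_sdiff_superlevelSet_lt hfS hτ]

theorem sqrt_sum_sq_le_two_mul_sqrt_card : √(∑ v, f v ^ 2) ≤ 2 * √(#S : ℝ) := by
  have hS : ∑ v, indic S v ^ 2 = #S := by simp [indic]
  have : ∑ v, f v ^ 2 ≤ ∑ v, (2 * (f v - indic S v) ^ 2 + 2 * indic S v ^ 2) :=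
    sum_le_sum fun v _ => by nlinarith [sq_nonneg (f v - 2 * indic S v)]
  rw [sum_add_distrib, ← mul_sum, ← mul_sum, hS] at this
  rw [Real.sqrt_le_iff, mul_pow, Real.sq_sqrt (Nat.cast_nonneg _)]
  exact ⟨by positivity, by linarith⟩

theorem exists_sq_sum_abs_indic_superlevelSet_sub_markov_le {G : SimpleGraph V}
    [DecidableRel G.Adj] {d : ℕ} (hreg : ∀ v, G.degree v = d) (hd : d ≠ 0) :
    ∃ τ ∈ Set.Ico (1 / 6 : ℝ) (2 / 3),
      (∑ v, |indic (superlevelSet f τ) v - markov G d (indic (superlevelSet f τ)) v|) ^ 2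
        ≤ 64 * √(#S : ℝ) ^ 3 * √(∑ v, (f v - markov G d f v) ^ 2) := by
  obtain ⟨τ, hτ, hcut⟩ :=
    exists_mem_Ico_sq_mul_sum_abs_indic_sub_markov_le hreg hd f
      (show (1 / 6 : ℝ) < 2 / 3 by norm_num)
  refine ⟨τ, hτ, ?_⟩
  calc (∑ v, |indic (superlevelSet f τ) v - markov G d (indic (superlevelSet f τ)) v|) ^ 2
      = 4 * ((2 / 3 - 1 / 6) * ∑ v, |indic (superlevelSet f τ) v
          - markov G d (indic (superlevelSet f τ)) v|) ^ 2 := by ring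
    _ ≤ 4 * (4 * #(superlevelSet f (1 / 6)) * ∑ v, f v * (f v - markov G d f v)) := by
        gcongr
    _ ≤ 4 * (4 * #(superlevelSet f (1 / 6))
          * (2 * √(#S : ℝ) * √(∑ v, (f v - markov G d f v) ^ 2))) := by
        gcongr
        exact (Real.sum_mul_le_sqrt_mul_sqrt _ _ _).trans
          (by gcongr; exact sqrt_sum_sq_le_two_mul_sqrt_card hfS)
    _ ≤ 4 * (4 * (2 * #S) * (2 * √(#S : ℝ) * √(∑ v, (f v - markov G d f v) ^ 2))) := by
        gcongr
        exact (card_superlevelSet_lt_two_mul hfS le_rfl).le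
    _ = 64 * √(#S : ℝ) ^ 3 * √(∑ v, (f v - markov G d f v) ^ 2) := by
        linear_combination (-64 * √(#S : ℝ) * √(∑ v, (f v - markov G d f v) ^ 2))
          * Real.sq_sqrt (Nat.cast_nonneg (α := ℝ) #S)

end NearIndicator

theorem sq_rpow_div_four {x : ℝ} (hx : 0 ≤ x) (k : ℕ) : (x ^ ((k : ℝ) / 4)) ^ 2 = √x ^ k := by
  rw [← Real.rpow_natCast, ← Real.rpow_mul hx, Real.sqrt_eq_rpow, ← Real.rpow_natCast,
    ← Real.rpow_mul hx]
  ring_nf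

theorem l1norm_le_of_sq_sum_abs_le {V : Type*} [Fintype V] [Nonempty V] {g h : V → ℝ} {m : ℝ}
    {d : ℕ} (hm : 0 ≤ m) (hd : 1 ≤ d)
    (H : (∑ v, |g v|) ^ 2 ≤ 64 * √m ^ 3 * √(∑ v, h v ^ 2)) :
    l1norm g ≤ 4 * √d * (72 : ℝ) ^ ((1 : ℝ) / 4) * (m / Fintype.card V) ^ ((3 : ℝ) / 4)
      * √(l2norm h) := by
  have hn : (0 : ℝ) < Fintype.card V := by exact_mod_cast Fintype.card_pos
  have h72 : (4 : ℝ) ≤ √72 := Real.le_sqrt_of_sq_le (by norm_num)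
  have hd' : (1 : ℝ) ≤ d := by exact_mod_cast hd
  refine (pow_le_pow_iff_left₀ (by unfold l1norm; positivity) (by positivity) two_ne_zero).mp ?_
  calc l1norm g ^ 2 = (∑ v, |g v|) ^ 2 / (Fintype.card V) ^ 2 := by rw [l1norm, div_pow]
    _ ≤ 16 * d * √72 * √m ^ 3 * √(∑ v, h v ^ 2) / (Fintype.card V) ^ 2 := by
        gcongr
        refine H.trans ?_
        gcongr
        nlinarith
    _ = _ := by
        have := sq_rpow_div_four (by positivity : (0 : ℝ) ≤ m / Fintype.card V) 3
        have h1 := sq_rpow_div_four (by positivity : (0 : ℝ) ≤ 72) 1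
        push_cast at this h1
        rw [mul_pow, mul_pow, mul_pow, mul_pow, this, h1, Real.sq_sqrt (Nat.cast_nonneg d), l2norm,
          Real.sq_sqrt (Real.sqrt_nonneg _), Real.sqrt_div' _ hn.le, Real.sqrt_div' _ hn.le]
        field_simp
        rw [show √(Fintype.card V : ℝ) ^ 4 = (√(Fintype.card V : ℝ) ^ 2) ^ 2 by ring,
          Real.sq_sqrt hn.le]
        ring

theorem nonempty_and_sum_sq_lt_of_l2norm_lt {V : Type*} [Fintype V] {g : V → ℝ} {m : ℝ}
    (hm : 0 ≤ m) (h : l2norm g < √(m / Fintype.card V) / 6) :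
    Nonempty V ∧ ∑ v, g v ^ 2 < m / 36 := by
  have hV : Nonempty V := by
    by_contra hV
    rw [not_nonempty_iff, ← Fintype.card_eq_zero_iff] at hV
    rw [hV, Nat.cast_zero, div_zero, Real.sqrt_zero, zero_div] at h
    exact (Real.sqrt_nonneg _).not_gt h
  have hn : (0 : ℝ) < Fintype.card V := by exact_mod_cast Fintype.card_pos
  refine ⟨hV, ?_⟩
  have := pow_lt_pow_left₀ h (Real.sqrt_nonneg _) two_ne_zero
  rw [div_pow, l2norm, Real.sq_sqrt (by positivity), Real.sq_sqrt (by positivity)] at this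
  rw [← div_lt_div_iff_of_pos_right hn]
  linarith [show m / Fintype.card V / 6 ^ 2 = m / 36 / Fintype.card V by ring]

theorem stmt8_general {V : Type*} [Fintype V] [DecidableEq V] (G : SimpleGraph V) [DecidableRel G.Adj]
    (d : ℕ) (hd : 1 ≤ d) (hreg : ∀ v, G.degree v = d)
    (S : Finset V) (f : V → ℝ)
    (h2 : l2norm (fun v => f v - indic S v)
        < Real.sqrt ((S.card : ℝ) / Fintype.card V) / 6) :
    ∃ U : Finset V,
      (∀ v ∈ U, 0 < f v) ∧
      ((U.card : ℝ) / Fintype.card V < 2 * ((S.card : ℝ) / Fintype.card V)) ∧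
      ((3 / 4 : ℝ) * ((S.card : ℝ) / Fintype.card V)
          < ((U ∩ S).card : ℝ) / Fintype.card V) ∧
      l1norm (fun v => indic U v - markov G d (indic U) v)
        ≤ 4 * Real.sqrt d * (72 : ℝ) ^ ((1 : ℝ) / 4)
            * ((S.card : ℝ) / Fintype.card V) ^ ((3 : ℝ) / 4)
            * Real.sqrt (l2norm (fun v => f v - markov G d f v)) := by
  obtain ⟨hV, hfS⟩ := nonempty_and_sum_sq_lt_of_l2norm_lt (Nat.cast_nonneg _) h2
  have hn : (0 : ℝ) < Fintype.card V := by exact_mod_cast Fintype.card_pos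
  obtain ⟨τ, ⟨hτ₁, hτ₂⟩, hcut⟩ :=
    exists_sq_sum_abs_indic_superlevelSet_sub_markov_le hfS hreg (by omega)
  refine ⟨superlevelSet f τ, fun v hv => by linarith [mem_superlevelSet.1 hv], ?_, ?_,
    l1norm_le_of_sq_sum_abs_le (Nat.cast_nonneg _) hd hcut⟩
  · rw [← mul_div_assoc, div_lt_div_iff_of_pos_right hn]
    exact card_superlevelSet_lt_two_mul hfS hτ₁
  · rw [← mul_div_assoc, div_lt_div_iff_of_pos_right hn]
    exact three_quarters_mul_card_lt_card_superlevelSet_inter hfS hτ₂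

/-- Lemma 2 of the paper: if `f : V → [0,1]` has `‖f‖₁ = μ(S)` and `‖f - χ_S‖ < √(μ(S))/6`,
then there is `U ⊆ supp(f)` with `μ(U) < 2μ(S)`, `μ(U ∩ S) > (3/4)μ(S)` and
`‖χ_U - Mχ_U‖₁ ≤ 4·√d·72^{1/4}·μ(S)^{3/4}·‖f - Mf‖^{1/2}`. -/
theorem stmt8 {V : Type*} [Fintype V] [DecidableEq V] (G : SimpleGraph V) [DecidableRel G.Adj]
    (d : ℕ) (hd : 1 ≤ d) (hreg : ∀ v, G.degree v = d)
    (S : Finset V) (f : V → ℝ) (hf : ∀ v, f v ∈ Set.Icc (0 : ℝ) 1)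
    (h1 : l1norm f = (S.card : ℝ) / Fintype.card V)
    (h2 : l2norm (fun v => f v - indic S v)
        < Real.sqrt ((S.card : ℝ) / Fintype.card V) / 6) :
    ∃ U : Finset V,
      (∀ v ∈ U, 0 < f v) ∧
      ((U.card : ℝ) / Fintype.card V < 2 * ((S.card : ℝ) / Fintype.card V)) ∧
      ((3 / 4 : ℝ) * ((S.card : ℝ) / Fintype.card V)
          < ((U ∩ S).card : ℝ) / Fintype.card V) ∧
      l1norm (fun v => indic U v - markov G d (indic U) v)
        ≤ 4 * Real.sqrt d * (72 : ℝ) ^ ((1 : ℝ) / 4)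
            * ((S.card : ℝ) / Fintype.card V) ^ ((3 : ℝ) / 4)
            * Real.sqrt (l2norm (fun v => f v - markov G d f v)) :=
  stmt8_general G d hd hreg S f h2
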